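/- Let f : [0,1] → [0,1] be continuous, let k ≥ 1, and assume that Per(f,k) is a Cantor set. Fix x ∈ Per(f,k) and ε > 0, and let μ_x = (1/k)·∑_{i=0}^{k-1} δ_{f^i(x)} be the unique f-invariant Borel probability measure supported on the orbit of x. Then there exists a non-atomic f-invariant Borel probability measure ν whose support is contained in Per(f,k) such that the Lévy–Prokhorov distance D(μ_x, ν) < ε. -/

import Mathlib

open MeasureTheory Set Metric Filter Topology

noncomputable section

/-- Lebesgue measure on the unit interval `[0,1]`, viewed as a measure on the subtype. -/
def lebI : Measure unitInterval := (volume : Measure ℝ).comap Subtype.val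

/-- A continuous self-map of `[0,1]` preserves Lebesgue measure. -/
def MeasPres (f : C(unitInterval, unitInterval)) : Prop :=
  ∀ A : Set unitInterval, MeasurableSet A → lebI (f ⁻¹' A) = lebI A

/-- The space `C_λ(I)` of continuous Lebesgue-measure-preserving maps of `[0,1]`. -/
def CLam : Set C(unitInterval, unitInterval) := {f | MeasPres f}

/-- `Fix(f,k) = {x : f^k x = x}`. -/
def FixSet {X : Type*} (f : X → X) (k : ℕ) : Set X := {x | f^[k] x = x}

/-- `Per(f,k) = {x : f^k x = x and f^i x ≠ x for 1 ≤ i < k}`. -/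
def PerSet {X : Type*} (f : X → X) (k : ℕ) : Set X :=
  {x | f^[k] x = x ∧ ∀ i : ℕ, 1 ≤ i → i < k → f^[i] x ≠ x}

/-- `Per(f) = ⋃_{k ≥ 1} Fix(f,k)`, the set of all periodic points. -/
def PerAll {X : Type*} (f : X → X) : Set X := ⋃ k ∈ {k : ℕ | 1 ≤ k}, FixSet f k

/-- A Cantor set: nonempty, compact, perfect and totally disconnected. -/
def IsCantorSet {X : Type*} [TopologicalSpace X] (C : Set X) : Prop :=
  C.Nonempty ∧ IsCompact C ∧ Perfect C ∧ IsTotallyDisconnected C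

/-- The Lévy–Prokhorov distance between two Borel measures on `[0,1]`:
`D(μ,ν) = inf {ε > 0 : μ A ≤ ν (B(A,ε)) + ε and ν A ≤ μ (B(A,ε)) + ε for all Borel A}`. -/
def prokhorovDist (μ ν : Measure unitInterval) : ℝ :=
  sInf {ε : ℝ | 0 < ε ∧ ∀ A : Set unitInterval, MeasurableSet A →
      μ A ≤ ν (Metric.thickening ε A) + ENNReal.ofReal ε ∧
      ν A ≤ μ (Metric.thickening ε A) + ENNReal.ofReal ε}

/-- `μ_x = (1/k) ∑_{i<k} δ_{f^i(x)}`: the CO-measure on the orbit of `x ∈ Per(f,k)`. -/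
def orbitMeasure (f : unitInterval → unitInterval) (k : ℕ) (x : unitInterval) :
    Measure unitInterval :=
  (k : ENNReal)⁻¹ • ∑ i ∈ Finset.range k, Measure.dirac (f^[i] x)

/-!
Near `x`, the Cantor set `Per(f,k)` contains a nonempty perfect piece `K` on which the first `k`
iterates of `f` stay `ε/2`-close to those of `x`. A continuous injection of Cantor space into `K`
pushes the coin-flip measure forward to an atomless probability measure `λ` carried by `K`.
Averaging it along the orbit, `ν = (1/k) ∑_{i<k} (f^i)_* λ`, gives an `f`-invariant measure
because `f^k = id` on `K`; it stays atomless because each `f^i` is injective on `Per(f,k)`, and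
it is `ε/2`-close to `μ_x = (1/k) ∑_{i<k} (f^i)_* δ_x` because `(f^i)_* λ` lives in the
`ε/2`-ball around `f^i x`.
-/

open scoped ENNReal

section CantorSpace

open ProbabilityTheory

def coinFlips : Measure (ℕ → Bool) := Measure.infinitePi fun _ ↦ uniformOn univ

instance : IsProbabilityMeasure coinFlips := by
  unfold coinFlips; infer_instance

instance : NullSingletonClass coinFlips := by
  refine ⟨fun b ↦ le_antisymm ?_ zero_le⟩
  refine ge_of_tendsto' (ENNReal.tendsto_pow_atTop_nhds_zero_of_lt_one
    (by norm_num : (2⁻¹ : ℝ≥0∞) < 1)) fun n ↦ ?_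
  calc coinFlips {b} ≤ coinFlips ((Finset.range n : Set ℕ).pi fun i ↦ {b i}) :=
        measure_mono fun c hc ↦ by simp_all
    _ = 2⁻¹ ^ n := by
        rw [coinFlips, Measure.infinitePi_pi _ fun _ _ ↦ measurableSet_singleton _]
        simp only [uniformOn_univ, Measure.count_singleton, Fintype.card_bool, Nat.cast_ofNat,
          one_div, Finset.prod_const, Finset.card_range]

end CantorSpace

theorem Finset.sum_range_succ_eq_sum_range_of_eq {M : Type*} [AddCommMonoid M] {m : ℕ → M}
    {k : ℕ} (h : m k = m 0) : ∑ i ∈ range k, m (i + 1) = ∑ i ∈ range k, m i := by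
  cases k with
  | zero => simp
  | succ n => rw [sum_range_succ, h, sum_range_succ']

theorem MeasureTheory.NullSingletonClass.map_of_injOn {X Y : Type*} [MeasurableSpace X]
    [MeasurableSpace Y] [MeasurableSingletonClass Y] {μ : Measure X} [NullSingletonClass μ]
    {g : X → Y} (hg : Measurable g) {S : Set X} (hS : μ Sᶜ = 0) (hinj : InjOn g S) :
    NullSingletonClass (μ.map g) := by
  refine ⟨fun y ↦ ?_⟩
  rw [Measure.map_apply hg (measurableSet_singleton y), ← measure_inter_conull hS]
  exact Set.Subsingleton.measure_zero
    (fun a ha b hb ↦ hinj ha.2 hb.2 (ha.1.trans hb.1.symm)) μ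

theorem Perfect.exists_isProbabilityMeasure_nullSingletonClass {X : Type*} [MetricSpace X]
    [CompleteSpace X] [MeasurableSpace X] [BorelSpace X] {C : Set X}
    (hC : Perfect C) (hne : C.Nonempty) :
    ∃ μ : Measure X, IsProbabilityMeasure μ ∧ NullSingletonClass μ ∧ μ Cᶜ = 0 := by
  obtain ⟨F, hFC, hFcont, hFinj⟩ := hC.exists_nat_bool_injection hne
  refine ⟨coinFlips.map F, Measure.isProbabilityMeasure_map hFcont.aemeasurable,
    .map_of_injOn hFcont.measurable (by simp) (hFinj.injOn (s := univ)), measure_mono_null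
      (compl_subset_compl.2 hFC) ?_⟩
  rw [Measure.map_apply hFcont.measurable (isCompact_range hFcont).isClosed.measurableSet.compl]
  simp

theorem mapsTo_perSet {X : Type*} (f : X → X) (k : ℕ) : MapsTo f (PerSet f k) (PerSet f k) := by
  rintro z ⟨hzk, hzmin⟩
  refine ⟨by rw [← Function.iterate_succ_apply, Function.iterate_succ_apply', hzk],
    fun i hi hik hfz ↦ hzmin i hi hik ?_⟩
  obtain ⟨m, rfl⟩ : ∃ m, k = m + 1 := ⟨k - 1, by omega⟩
  calc f^[i] z = f^[i] (f^[m] (f z)) := by rw [← Function.iterate_succ_apply, hzk]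
    _ = f^[m] (f^[i] (f z)) := by
      rw [← Function.iterate_add_apply, ← Function.iterate_add_apply, add_comm]
    _ = z := by rw [hfz, ← Function.iterate_succ_apply, hzk]

theorem injOn_iterate_fixSet {X : Type*} (f : X → X) {k : ℕ} (hk : 0 < k) (i : ℕ) :
    InjOn f^[i] (FixSet f k) :=
  ((Function.bijOn_ptsOfPeriod f hk).iterate i).injOn

section OrbitAverage

variable {X : Type*} [MeasurableSpace X] {f : X → X} {k : ℕ} {μ : Measure X}

def orbitAverage (f : X → X) (k : ℕ) (μ : Measure X) : Measure X :=
  (k : ℝ≥0∞)⁻¹ • ∑ i ∈ Finset.range k, μ.map f^[i]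

theorem orbitAverage_apply (hf : Measurable f) {s : Set X} (hs : MeasurableSet s) :
    orbitAverage f k μ s =
      (k : ℝ≥0∞)⁻¹ * ∑ i ∈ Finset.range k, μ (f^[i] ⁻¹' s) := by
  simp only [orbitAverage, Measure.smul_apply, smul_eq_mul, Measure.coe_finsetSum,
    Finset.sum_apply, Measure.map_apply (hf.iterate _) hs]

theorem isProbabilityMeasure_orbitAverage (hf : Measurable f) (hk : 0 < k)
    [IsProbabilityMeasure μ] : IsProbabilityMeasure (orbitAverage f k μ) := by
  constructor
  rw [orbitAverage_apply hf .univ]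
  simp [ENNReal.inv_mul_cancel (Nat.cast_ne_zero.2 hk.ne') (ENNReal.natCast_ne_top k)]

theorem map_orbitAverage (hf : Measurable f) (hμ : μ (FixSet f k)ᶜ = 0) :
    (orbitAverage f k μ).map f = orbitAverage f k μ := by
  have hperiodic : μ.map f^[k] = μ := by
    have hfix : f^[k] =ᵐ[μ] id := measure_eq_zero_iff_ae_notMem.1 hμ |>.mono fun _ ↦ not_not.1
    rw [Measure.map_congr hfix, Measure.map_id]
  rw [orbitAverage, Measure.map_smul, ← Measure.mapₗ_apply_of_measurable hf, map_sum]
  simp only [Measure.mapₗ_apply_of_measurable hf, Measure.map_map hf (hf.iterate _),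
    ← Function.iterate_succ']
  rw [Finset.sum_range_succ_eq_sum_range_of_eq (m := fun i ↦ μ.map f^[i])]
  simpa using hperiodic

theorem nullSingletonClass_orbitAverage [MeasurableSingletonClass X] (hf : Measurable f)
    (hk : 0 < k) [NullSingletonClass μ] (hμ : μ (FixSet f k)ᶜ = 0) :
    NullSingletonClass (orbitAverage f k μ) := by
  refine ⟨fun y ↦ ?_⟩
  rw [orbitAverage_apply hf (measurableSet_singleton y), Finset.sum_eq_zero, mul_zero]
  intro i _
  have := NullSingletonClass.map_of_injOn (hf.iterate i) hμ (injOn_iterate_fixSet f hk i)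
  rw [← Measure.map_apply (hf.iterate i) (measurableSet_singleton y), measure_singleton]

theorem orbitAverage_compl_eq_zero (hf : Measurable f) {S : Set X} (hS : MeasurableSet S)
    (hfS : MapsTo f S S) (hμ : μ Sᶜ = 0) : orbitAverage f k μ Sᶜ = 0 := by
  rw [orbitAverage_apply hf hS.compl, Finset.sum_eq_zero, mul_zero]
  exact fun i _ ↦ measure_mono_null (fun z hz hzS ↦ hz (hfS.iterate i hzS)) hμ

end OrbitAverage

theorem eventually_forall_dist_iterate_lt {X : Type*} [PseudoMetricSpace X] {f : X → X}
    (hf : Continuous f) (x : X) {δ : ℝ} (hδ : 0 < δ) (k : ℕ) :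
    ∀ᶠ z in 𝓝 x, ∀ i < k, dist (f^[i] z) (f^[i] x) < δ :=
  (eventually_all_finite (finite_lt_nat k)).2 fun i _ ↦
    (hf.iterate i).continuousAt.eventually (ball_mem_nhds _ hδ)

section Thickening

variable {X Y : Type*} [MeasurableSpace X] [PseudoMetricSpace Y] {μ : Measure X} {S : Set X}
  {g : X → Y} {x : X} {δ : ℝ}

theorem measure_preimage_le_dirac_preimage_thickening [IsProbabilityMeasure μ] (hS : μ Sᶜ = 0)
    (hg : ∀ z ∈ S, dist (g z) (g x) < δ) (A : Set Y) :
    μ (g ⁻¹' A) ≤ Measure.dirac x (g ⁻¹' thickening δ A) := by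
  by_cases hx : g x ∈ thickening δ A
  · rw [Measure.dirac_apply_of_mem (show x ∈ g ⁻¹' thickening δ A from hx)]
    exact prob_le_one
  · have hA : g ⁻¹' A ⊆ Sᶜ := fun z hzA hzS ↦
      hx (mem_thickening_iff.2 ⟨g z, hzA, by rw [dist_comm]; exact hg z hzS⟩)
    rw [measure_mono_null hA hS]
    exact zero_le

theorem dirac_preimage_le_measure_preimage_thickening [MeasurableSingletonClass X]
    [IsProbabilityMeasure μ] (hS : μ Sᶜ = 0) (hg : ∀ z ∈ S, dist (g z) (g x) < δ)
    (A : Set Y) :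
    Measure.dirac x (g ⁻¹' A) ≤ μ (g ⁻¹' thickening δ A) := by
  by_cases hx : g x ∈ A
  · calc Measure.dirac x (g ⁻¹' A) ≤ μ univ := by rw [measure_univ]; exact prob_le_one
      _ = μ (univ ∩ S) := (measure_inter_conull hS).symm
      _ ≤ μ (g ⁻¹' thickening δ A) :=
        measure_mono fun z hz ↦ mem_thickening_iff.2 ⟨g x, hx, hg z hz.2⟩
  · rw [Measure.dirac_apply, indicator_of_notMem (show x ∉ g ⁻¹' A from hx)]
    exact zero_le

end Thickening

theorem prokhorovDist_le_of_forall_le_thickening {μ ν : Measure unitInterval} {δ : ℝ}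
    (hδ : 0 < δ) (hμν : ∀ A, MeasurableSet A → μ A ≤ ν (thickening δ A))
    (hνμ : ∀ A, MeasurableSet A → ν A ≤ μ (thickening δ A)) :
    prokhorovDist μ ν ≤ δ :=
  csInf_le ⟨0, fun _ h ↦ h.1.le⟩
    ⟨hδ, fun A hA ↦ ⟨(hμν A hA).trans le_self_add, (hνμ A hA).trans le_self_add⟩⟩

theorem orbitAverage_dirac {f : unitInterval → unitInterval} (hf : Measurable f) (k : ℕ)
    (x : unitInterval) : orbitAverage f k (Measure.dirac x) = orbitMeasure f k x := by
  simp only [orbitAverage, orbitMeasure, Measure.map_dirac' (hf.iterate _)]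

theorem prokhorovDist_orbitMeasure_orbitAverage_le {f : unitInterval → unitInterval}
    (hf : Measurable f) {k : ℕ} {μ : Measure unitInterval} [IsProbabilityMeasure μ]
    {S : Set unitInterval} (hS : μ Sᶜ = 0) {x : unitInterval} {δ : ℝ} (hδ : 0 < δ)
    (hclose : ∀ z ∈ S, ∀ i < k, dist (f^[i] z) (f^[i] x) < δ) :
    prokhorovDist (orbitMeasure f k x) (orbitAverage f k μ) ≤ δ := by
  rw [← orbitAverage_dirac hf]
  have hthick (A : Set unitInterval) : MeasurableSet (thickening δ A) :=
    isOpen_thickening.measurableSet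
  refine prokhorovDist_le_of_forall_le_thickening hδ (fun A hA ↦ ?_) (fun A hA ↦ ?_) <;>
    rw [orbitAverage_apply hf hA, orbitAverage_apply hf (hthick A)] <;>
    gcongr _ * ∑ i ∈ _, ?_ with i hi <;>
    have hclose_i := fun z hz ↦ hclose z hz i (Finset.mem_range.1 hi)
  · exact dirac_preimage_le_measure_preimage_thickening hS hclose_i A
  · exact measure_preimage_le_dirac_preimage_thickening hS hclose_i A

/-- `ν (PerSet f k) = 1` encodes `supp ν ⊆ Per(f,k)`: they agree as `Per(f,k)` is closed. -/
theorem orbitMeasure_approx_nonatomic (f : unitInterval → unitInterval) (hf : Continuous f)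
    (k : ℕ) (hk : 1 ≤ k) (hCantor : IsCantorSet (PerSet f k))
    (x : unitInterval) (hx : x ∈ PerSet f k) (ε : ℝ) (hε : 0 < ε) :
    ∃ ν : Measure unitInterval, IsProbabilityMeasure ν ∧
      (∀ y : unitInterval, ν {y} = 0) ∧
      (∀ A : Set unitInterval, MeasurableSet A → ν (f ⁻¹' A) = ν A) ∧
      ν (PerSet f k) = 1 ∧
      prokhorovDist (orbitMeasure f k x) ν < ε := by
  obtain ⟨-, hcompact, hperfect, -⟩ := hCantor
  have hfm := hf.measurable
  obtain ⟨r, hr, hclose⟩ := nhds_basis_closedBall.eventually_iff.1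
    (eventually_forall_dist_iterate_lt hf x (half_pos hε) k)
  obtain ⟨hKperfect, hKne⟩ := hperfect.closure_nhds_inter x hx (mem_ball_self hr) isOpen_ball
  have hK : closure (ball x r ∩ PerSet f k) ⊆ closedBall x r ∩ PerSet f k :=
    closure_minimal (inter_subset_inter_left _ ball_subset_closedBall)
      (isClosed_closedBall.inter hcompact.isClosed)
  obtain ⟨μ, hμ, hμatoms, hμK⟩ :=
    hKperfect.exists_isProbabilityMeasure_nullSingletonClass hKne
  have hμS : μ (closedBall x r ∩ PerSet f k)ᶜ = 0 :=
    measure_mono_null (compl_subset_compl.2 hK) hμK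
  have hμPer : μ (PerSet f k)ᶜ = 0 :=
    measure_mono_null (compl_subset_compl.2 inter_subset_right) hμS
  have hμFix : μ (FixSet f k)ᶜ = 0 :=
    measure_mono_null (compl_subset_compl.2 fun _ hz ↦ hz.1) hμPer
  have hν := isProbabilityMeasure_orbitAverage (μ := μ) hfm hk
  have hνatoms := nullSingletonClass_orbitAverage hfm hk hμFix
  refine ⟨orbitAverage f k μ, hν, measure_singleton, fun A hA ↦ ?_, ?_, ?_⟩
  · rw [← Measure.map_apply hfm hA, map_orbitAverage hfm hμFix]
  · exact (prob_compl_eq_zero_iff hcompact.measurableSet).1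
      (orbitAverage_compl_eq_zero hfm hcompact.measurableSet (mapsTo_perSet f k) hμPer)
  · exact (prokhorovDist_orbitMeasure_orbitAverage_le hfm hμS (half_pos hε)
      fun _ hz ↦ hclose hz.1).trans_lt (half_lt_self hε)
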